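/- arXiv:1610.01219 — 2 statements merged into one kernel-verified Lean document; each statement's English description precedes it below -/
import Mathlib

section
/- If f : ℝ² → ℝ is a homogeneous polynomial of degree k ≥ 1 and h : ℝ² → ℝ² is a differentiable map with h(0) = 0 such that f ∘ h = f, then f ∘ (Dh(0)) = f, where Dh(0) is the derivative (tangent map) of h at 0. -/
/-!
As `t → 0⁺` the rescalings `t⁻¹ • h (t • x)` converge to `Dh(0) x`. By homogeneity and
`f ∘ h = f`, `f` takes the constant value `f x` along them, so continuity of `f` gives
`f (Dh(0) x) = f x`.
-/

open Filter Topology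

theorem MvPolynomial.IsHomogeneous.eval_smul {σ R : Type*} [CommSemiring R] {φ : MvPolynomial σ R}
    {n : ℕ} (hφ : φ.IsHomogeneous n) (c : R) (x : σ → R) :
    eval (c • x) φ = c ^ n * eval x φ := by
  rw [eval_eq, eval_eq, Finset.mul_sum]
  refine Finset.sum_congr rfl fun d hd => ?_
  have hdeg : ∑ i ∈ d.support, d i = n := by
    rw [← hφ (mem_support_iff.mp hd), Finsupp.weight_apply, Finsupp.sum]
    simp
  simp only [Pi.smul_apply, smul_eq_mul, mul_pow, Finset.prod_mul_distrib,
    Finset.prod_pow_eq_pow_sum, hdeg]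
  ring

theorem HasFDerivAt.tendsto_inv_smul_apply_smul {E F : Type*} [NormedAddCommGroup E]
    [NormedSpace ℝ E] [NormedAddCommGroup F] [NormedSpace ℝ F] {h : E → F} {D : E →L[ℝ] F}
    (hD : HasFDerivAt h D 0) (h0 : h 0 = 0) (x : E) :
    Tendsto (fun t : ℝ => t⁻¹ • h (t • x)) (𝓝[>] 0) (𝓝 (D x)) := by
  simpa [h0] using (hD.hasLineDerivAt x).tendsto_slope_zero_right

theorem apply_fderiv_eq_of_comp_eq {E F : Type*} [NormedAddCommGroup E] [NormedSpace ℝ E]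
    [TopologicalSpace F] [T2Space F] [MulAction ℝ F] {k : ℕ} {f : E → F}
    (hf : Continuous f) (hhom : ∀ t : ℝ, 0 < t → ∀ y, f (t • y) = t ^ k • f y)
    {h : E → E} {D : E →L[ℝ] E} (hD : HasFDerivAt h D 0) (h0 : h 0 = 0)
    (hinv : ∀ y, f (h y) = f y) (x : E) :
    f (D x) = f x := by
  have hlim := (hf.tendsto _).comp (hD.tendsto_inv_smul_apply_smul h0 x)
  refine tendsto_nhds_unique hlim (tendsto_const_nhds.congr' ?_)
  filter_upwards [self_mem_nhdsWithin] with t (ht : 0 < t)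
  rw [Function.comp_apply, hhom _ (inv_pos.2 ht), hinv, hhom _ ht, smul_smul, ← mul_pow,
    inv_mul_cancel₀ ht.ne', one_pow, one_smul]

theorem stmt0_general (k : ℕ) (P : MvPolynomial (Fin 2) ℝ)
    (hP : P.IsHomogeneous k)
    (f : (Fin 2 → ℝ) → ℝ) (hf : ∀ x, f x = MvPolynomial.eval x P)
    (h : (Fin 2 → ℝ) → (Fin 2 → ℝ)) (D : (Fin 2 → ℝ) →L[ℝ] (Fin 2 → ℝ))
    (hdiff : HasFDerivAt h D 0) (h0 : h 0 = 0)
    (hinv : ∀ x, f (h x) = f x) :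
    ∀ x, f (D x) = f x := by
  obtain rfl : f = fun x => MvPolynomial.eval x P := funext hf
  exact apply_fderiv_eq_of_comp_eq (MvPolynomial.continuous_eval P)
    (fun t _ y => hP.eval_smul t y) hdiff h0 hinv

/-- If `f` is (the evaluation of) a homogeneous polynomial of degree `k ≥ 1` on `ℝ²`
and `h` is differentiable at `0` with `h 0 = 0` and `f ∘ h = f`, then `f ∘ Dh(0) = f`. -/
theorem stmt0 (k : ℕ) (hk : 1 ≤ k) (P : MvPolynomial (Fin 2) ℝ)
    (hP : P.IsHomogeneous k)
    (f : (Fin 2 → ℝ) → ℝ) (hf : ∀ x, f x = MvPolynomial.eval x P)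
    (h : (Fin 2 → ℝ) → (Fin 2 → ℝ)) (D : (Fin 2 → ℝ) →L[ℝ] (Fin 2 → ℝ))
    (hdiff : HasFDerivAt h D 0) (h0 : h 0 = 0)
    (hinv : ∀ x, f (h x) = f x) :
    ∀ x, f (D x) = f x :=
  stmt0_general k P hP f hf h D hdiff h0 hinv
end

section
/- A nonconstant homogeneous polynomial f : ℝ² → ℝ that splits as a product of pairwise non-proportional linear forms L₁,…,Lₙ with n ≥ 2 has 0 as an isolated critical point: there is a punctured neighborhood of 0 containing no critical points of f. -/
/-- A product of `n ≥ 2` pairwise non-proportional nonzero linear forms on `ℝ²`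
has `0` as an isolated critical point. -/
theorem stmt5 (n : ℕ) (hn : 2 ≤ n) (a b : Fin n → ℝ)
    (hnz : ∀ i, (a i, b i) ≠ (0, 0))
    (hind : ∀ i j, i ≠ j → a i * b j ≠ a j * b i)
    (f : ℝ × ℝ → ℝ)
    (hf : ∀ p : ℝ × ℝ, f p = ∏ i, (a i * p.1 + b i * p.2)) :
    ∃ ε > 0, ∀ p : ℝ × ℝ, p ≠ 0 → ‖p‖ < ε → fderiv ℝ f p ≠ 0 := by
  -- the linear forms as continuous linear maps
  set L : Fin n → (ℝ × ℝ) →L[ℝ] ℝ := fun i =>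
    a i • (ContinuousLinearMap.fst ℝ ℝ ℝ) + b i • (ContinuousLinearMap.snd ℝ ℝ ℝ) with hL
  have hLapp : ∀ i (p : ℝ × ℝ), L i p = a i * p.1 + b i * p.2 := by
    intro i p; simp [hL]
  refine ⟨1, one_pos, fun p hp _ hcon => ?_⟩
  -- compute the derivative
  have hder : HasFDerivAt f (∑ i, (∏ j ∈ Finset.univ.erase i, (L j p)) • L i) p := by
    have h1 : HasFDerivAt (∏ i ∈ Finset.univ, (fun q : ℝ × ℝ => L i q) ·)
        (∑ i ∈ Finset.univ, (∏ j ∈ Finset.univ.erase i, (L j p)) • L i) p :=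
      HasFDerivAt.finset_prod (fun i _ => (L i).hasFDerivAt)
    have : f = (∏ i ∈ Finset.univ, (fun q : ℝ × ℝ => L i q) ·) := by
      funext q; rw [hf q]; simp [hLapp]
    rw [this]; exact h1
  rw [hder.fderiv] at hcon
  by_cases hz : ∃ i, L i p = 0
  · obtain ⟨i, hi⟩ := hz
    -- all other forms are nonzero at p
    have huniq : ∀ k, k ≠ i → L k p ≠ 0 := by
      intro k hk hkz
      have hi' : a i * p.1 + b i * p.2 = 0 := by rw [← hLapp]; exact hi
      have hk' : a k * p.1 + b k * p.2 = 0 := by rw [← hLapp]; exact hkz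
      have hx : (a k * b i - a i * b k) * p.1 = 0 := by
        linear_combination b i * hk' - b k * hi'
      have hy : (a k * b i - a i * b k) * p.2 = 0 := by
        linear_combination a k * hi' - a i * hk'
      have hd : a k * b i - a i * b k ≠ 0 := sub_ne_zero.mpr (hind k i hk)
      have hp1 : p.1 = 0 := by
        rcases mul_eq_zero.mp hx with h | h; exact absurd h hd; exact h
      have hp2 : p.2 = 0 := by
        rcases mul_eq_zero.mp hy with h | h; exact absurd h hd; exact h
      exact hp (Prod.ext hp1 hp2)
    -- evaluate the derivative at (a i, b i)
    have := ContinuousLinearMap.ext_iff.mp hcon (a i, b i)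
    simp only [ContinuousLinearMap.sum_apply, ContinuousLinearMap.smul_apply,
      ContinuousLinearMap.zero_apply, smul_eq_mul] at this
    have hsum : ∑ k, (∏ j ∈ Finset.univ.erase k, L j p) * L k (a i, b i)
        = (∏ j ∈ Finset.univ.erase i, L j p) * L i (a i, b i) := by
      refine Finset.sum_eq_single i (fun k _ hk => ?_) (by simp)
      have : (∏ j ∈ Finset.univ.erase k, L j p) = 0 :=
        Finset.prod_eq_zero (Finset.mem_erase.mpr ⟨fun h => hk (h ▸ rfl), Finset.mem_univ i⟩) hi
      rw [this, zero_mul]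
    rw [hsum] at this
    rcases mul_eq_zero.mp this with h | h
    · obtain ⟨j, hj, hj0⟩ := Finset.prod_eq_zero_iff.mp h
      exact huniq j (Finset.mem_erase.mp hj).1 hj0
    · rw [hLapp] at h
      have h' : a i * a i + b i * b i = 0 := h
      have hab := (add_eq_zero_iff_of_nonneg (mul_self_nonneg (a i))
        (mul_self_nonneg (b i))).mp h'
      exact hnz i (by simp [mul_self_eq_zero.mp hab.1, mul_self_eq_zero.mp hab.2])
  · -- no form vanishes: use Euler's identity
    push_neg at hz
    have := ContinuousLinearMap.ext_iff.mp hcon p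
    simp only [ContinuousLinearMap.sum_apply, ContinuousLinearMap.smul_apply,
      ContinuousLinearMap.zero_apply, smul_eq_mul] at this
    have hsum : ∑ k, (∏ j ∈ Finset.univ.erase k, L j p) * L k p
        = ∑ _k : Fin n, ∏ j, L j p := by
      refine Finset.sum_congr rfl (fun k _ => ?_)
      rw [Finset.prod_erase_mul _ _ (Finset.mem_univ k)]
    rw [hsum, Finset.sum_const] at this
    have hne : (∏ j, L j p) ≠ 0 := Finset.prod_ne_zero_iff.mpr (fun j _ => hz j)
    have hn0 : (n : ℝ) ≠ 0 := by positivity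
    simp only [Finset.card_univ, Fintype.card_fin, nsmul_eq_mul] at this
    exact (mul_ne_zero hn0 hne) this
end
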